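/- arXiv:2110.13568 — 2 statements merged into one kernel-verified Lean document; each statement's English description precedes it below -/
import Mathlib

section
/- Let Φ : M_n → M_m be a quantum channel (a completely positive trace-preserving linear map). Then Φ is CPCP if and only if Φ admits a family of Kraus operators that are entrywise real and non-negative and have at most one non-zero entry in each row. -/
open Matrix BigOperators
open scoped ComplexOrder

namespace CPCPPaper

/-- A matrix is a *completely positive (CP) matrix* if it is a finite sum of outer products
`x xᵀ` of entrywise non-negative vectors. Here `0 ≤ z` in `ℂ` means that `z` is real and
non-negative. -/
def IsCPMatrix {ι : Type*} [Fintype ι] (X : Matrix ι ι ℂ) : Prop :=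
  ∃ (k : ℕ) (v : Fin k → ι → ℂ),
    (∀ j i, 0 ≤ v j i) ∧ X = ∑ j, Matrix.vecMulVec (v j) (v j)

/-- The CP-rank of a matrix: the minimal number of terms in a decomposition as a sum of
outer products of entrywise non-negative vectors. -/
noncomputable def cpRank {ι : Type*} [Fintype ι] (X : Matrix ι ι ℂ) : ℕ :=
  sInf {k : ℕ | ∃ v : Fin k → ι → ℂ,
    (∀ j i, 0 ≤ v j i) ∧ X = ∑ j, Matrix.vecMulVec (v j) (v j)}

/-- A matrix is *doubly non-negative (DNN)* if it is positive semidefinite and all of its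
entries are real and non-negative. -/
def IsDNNMatrix {ι : Type*} [Fintype ι] (X : Matrix ι ι ℂ) : Prop :=
  X.PosSemidef ∧ ∀ i j, 0 ≤ X i j

/-- The blockwise extension `I_k ⊗ Φ` of a map `Φ : M_n → M_m`. -/
def tensorExt {n m : ℕ} (k : ℕ)
    (Φ : Matrix (Fin n) (Fin n) ℂ → Matrix (Fin m) (Fin m) ℂ)
    (X : Matrix (Fin k × Fin n) (Fin k × Fin n) ℂ) :
    Matrix (Fin k × Fin m) (Fin k × Fin m) ℂ :=
  Matrix.of fun p q => Φ (Matrix.of fun i j => X (p.1, i) (q.1, j)) p.2 q.2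

/-- `Φ` is *completely positive completely positive (CPCP)* if `I_k ⊗ Φ` sends CP matrices
to CP matrices for every `k`. -/
def IsCPCP {n m : ℕ} (Φ : Matrix (Fin n) (Fin n) ℂ → Matrix (Fin m) (Fin m) ℂ) : Prop :=
  ∀ (k : ℕ) (X : Matrix (Fin k × Fin n) (Fin k × Fin n) ℂ),
    IsCPMatrix X → IsCPMatrix (tensorExt k Φ X)

/-- `Φ` is *completely positive doubly non-negative (CPDNN)* if `I_k ⊗ Φ` sends DNN matrices
to DNN matrices for every `k`. -/
def IsCPDNN {n m : ℕ} (Φ : Matrix (Fin n) (Fin n) ℂ → Matrix (Fin m) (Fin m) ℂ) : Prop :=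
  ∀ (k : ℕ) (X : Matrix (Fin k × Fin n) (Fin k × Fin n) ℂ),
    IsDNNMatrix X → IsDNNMatrix (tensorExt k Φ X)

/-- `Φ` is a *completely positive map* (in the superoperator sense) if `I_k ⊗ Φ` sends
positive semidefinite matrices to positive semidefinite matrices for every `k`. -/
def IsCPMap {n m : ℕ} (Φ : Matrix (Fin n) (Fin n) ℂ → Matrix (Fin m) (Fin m) ℂ) : Prop :=
  ∀ (k : ℕ) (X : Matrix (Fin k × Fin n) (Fin k × Fin n) ℂ),
    X.PosSemidef → (tensorExt k Φ X).PosSemidef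

/-- `Φ` is trace-preserving. -/
def IsTracePreserving {n m : ℕ}
    (Φ : Matrix (Fin n) (Fin n) ℂ → Matrix (Fin m) (Fin m) ℂ) : Prop :=
  ∀ X, (Φ X).trace = X.trace

/-- The Choi matrix `J(Φ) = ∑ᵢⱼ |i⟩⟨j| ⊗ Φ(|i⟩⟨j|)`. -/
def choiMatrix {n m : ℕ}
    (Φ : Matrix (Fin n) (Fin n) ℂ → Matrix (Fin m) (Fin m) ℂ) :
    Matrix (Fin n × Fin m) (Fin n × Fin m) ℂ :=
  Matrix.of fun p q => Φ (Matrix.single p.1 q.1 1) p.2 q.2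

/-- A *CP state*: a completely positive matrix with trace one. -/
def IsCPState {n : ℕ} (ρ : Matrix (Fin n) (Fin n) ℂ) : Prop :=
  IsCPMatrix ρ ∧ ρ.trace = 1

/-- `Φ` is *CP-preserving* if it maps CP states to CP states. -/
def IsCPPreserving {n m : ℕ}
    (Φ : Matrix (Fin n) (Fin n) ℂ → Matrix (Fin m) (Fin m) ℂ) : Prop :=
  ∀ ρ, IsCPState ρ → IsCPState (Φ ρ)

/-- The Pauli matrix `X`. -/
def PauliX : Matrix (Fin 2) (Fin 2) ℂ := !![0, 1; 1, 0]

/-- The Pauli matrix `Y`. -/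
def PauliY : Matrix (Fin 2) (Fin 2) ℂ := !![0, -Complex.I; Complex.I, 0]

/-- The Pauli matrix `Z`. -/
def PauliZ : Matrix (Fin 2) (Fin 2) ℂ := !![1, 0; 0, -1]

/-- The permutation matrix associated to a permutation. -/
def permMat {n : ℕ} (σ : Equiv.Perm (Fin n)) : Matrix (Fin n) (Fin n) ℂ :=
  Matrix.of fun i j => if i = σ j then 1 else 0

/-- Aux: conjugation fixes non-negative complex numbers. -/
lemma conj_of_nonneg' {z : ℂ} (h : 0 ≤ z) : (starRingEnd ℂ) z = z :=
  Complex.conj_eq_iff_im.mpr (Complex.nonneg_iff.mp h).2.symm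

/-- Aux: star fixes non-negative complex numbers. -/
lemma star_of_nonneg' {z : ℂ} (h : 0 ≤ z) : star z = z := conj_of_nonneg' h

/-- Aux: a sum over an arbitrary fintype of non-negative outer products is CP. -/
lemma isCPMatrix_of_fintype_sum' {ι κ : Type*} [Fintype ι] [Fintype κ]
    (v : κ → ι → ℂ) (hv : ∀ j i, 0 ≤ v j i) :
    IsCPMatrix (∑ j, Matrix.vecMulVec (v j) (v j)) := by
  classical
  obtain ⟨e⟩ : Nonempty (κ ≃ Fin (Fintype.card κ)) := ⟨Fintype.equivFin κ⟩
  refine ⟨Fintype.card κ, fun t => v (e.symm t), fun t i => hv _ _, ?_⟩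
  rw [← Equiv.sum_comp e.symm (fun j => Matrix.vecMulVec (v j) (v j))]

/-- Aux: entry of a sandwich of an outer product by a real matrix. -/
lemma sandwich_vecMulVec_apply' {m n : ℕ} (B : Matrix (Fin m) (Fin n) ℂ) (u v : Fin n → ℂ)
    (hB : ∀ r c, star (B r c) = B r c) (p q : Fin m) :
    (B * Matrix.vecMulVec u v * Bᴴ) p q = (∑ a, B p a * u a) * (∑ b, B q b * v b) := by
  rw [Finset.sum_mul_sum]
  simp only [Matrix.mul_apply, Matrix.conjTranspose_apply, Matrix.vecMulVec_apply, hB,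
    Finset.sum_mul]
  rw [Finset.sum_comm]
  exact Finset.sum_congr rfl fun a _ => Finset.sum_congr rfl fun b _ => by ring

/-- Aux: Kraus representation from a CP decomposition of the Choi matrix. -/
lemma kraus_of_choi' {n m : ℕ}
    (Φ : Matrix (Fin n) (Fin n) ℂ →ₗ[ℂ] Matrix (Fin m) (Fin m) ℂ)
    {k : ℕ} (w : Fin k → (Fin n × Fin m) → ℂ)
    (hw : ∀ t x, 0 ≤ w t x)
    (hchoi : ∀ (i j : Fin n) (p q : Fin m),
      Φ (Matrix.single i j 1) p q = ∑ t, w t (i, p) * w t (j, q)) :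
    ∀ X, Φ X = ∑ t, (Matrix.of fun r c => w t (c, r)) * X *
      (Matrix.of fun r c => w t (c, r))ᴴ := by
  intro X
  ext p q
  have hX : X = ∑ i : Fin n, ∑ j : Fin n, X i j • Matrix.single i j (1 : ℂ) := by
    conv_lhs => rw [Matrix.matrix_eq_sum_single X]
    refine Finset.sum_congr rfl fun i _ => Finset.sum_congr rfl fun j _ => ?_
    rw [Matrix.smul_single, smul_eq_mul, mul_one]
  have hL : Φ X p q = ∑ i : Fin n, ∑ j : Fin n, X i j *
      Φ (Matrix.single i j 1) p q := by
    conv_lhs => rw [hX]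
    rw [map_sum]
    rw [Matrix.sum_apply]
    refine Finset.sum_congr rfl fun i _ => ?_
    rw [map_sum, Matrix.sum_apply]
    refine Finset.sum_congr rfl fun j _ => ?_
    rw [_root_.map_smul, Matrix.smul_apply, smul_eq_mul]
  rw [hL, Matrix.sum_apply]
  have hconj : ∀ t x, (starRingEnd ℂ) (w t x) = w t x := fun t x => conj_of_nonneg' (hw t x)
  simp only [hchoi, Matrix.mul_apply, Matrix.conjTranspose_apply, Matrix.of_apply, hconj,
    Finset.mul_sum, Finset.sum_mul]
  have key : ∀ (f : Fin n → Fin n → Fin k → ℂ),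
      (∑ i, ∑ j, ∑ t, f i j t) = ∑ t, ∑ j, ∑ i, f i j t := by
    intro f
    calc (∑ i, ∑ j, ∑ t, f i j t)
        = ∑ i, ∑ t, ∑ j, f i j t := Finset.sum_congr rfl fun i _ => Finset.sum_comm
      _ = ∑ t, ∑ i, ∑ j, f i j t := Finset.sum_comm
      _ = ∑ t, ∑ j, ∑ i, f i j t := Finset.sum_congr rfl fun t _ => Finset.sum_comm
  rw [key (fun i j t => X i j * (w t (i, p) * w t (j, q)))]
  refine Finset.sum_congr rfl fun t _ => Finset.sum_congr rfl fun j _ =>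
    Finset.sum_congr rfl fun i _ => ?_
  rw [RCLike.star_def, hconj]
  ring

/-- A quantum channel is CPCP iff it admits a family of entrywise
non-negative Kraus operators each having at most one non-zero entry in each row. -/
theorem statement_4 {n m : ℕ}
    (Φ : Matrix (Fin n) (Fin n) ℂ →ₗ[ℂ] Matrix (Fin m) (Fin m) ℂ)
    (hCP : IsCPMap ⇑Φ) (hTP : IsTracePreserving ⇑Φ) :
    IsCPCP ⇑Φ ↔
      ∃ (k : ℕ) (A : Fin k → Matrix (Fin m) (Fin n) ℂ),
        (∀ j r c, 0 ≤ A j r c) ∧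
        (∀ j r c₁ c₂, A j r c₁ ≠ 0 → A j r c₂ ≠ 0 → c₁ = c₂) ∧
        (∀ X, Φ X = ∑ j, A j * X * (A j)ᴴ) := by
  constructor
  · -- forward direction
    intro hCPCP
    -- the unnormalized maximally entangled state has a CP Gram matrix
    set Ω : Fin n × Fin n → ℂ := fun p => if p.1 = p.2 then 1 else 0 with hΩ
    have hΩnn : ∀ p, (0 : ℂ) ≤ Ω p := by
      intro p
      by_cases h : p.1 = p.2 <;> simp [hΩ, h]
    have hΩCP : IsCPMatrix (Matrix.vecMulVec Ω Ω) :=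
      ⟨1, fun _ => Ω, fun _ p => hΩnn p, by simp⟩
    obtain ⟨k, w, hw, heq⟩ := hCPCP n (Matrix.vecMulVec Ω Ω) hΩCP
    -- the Choi matrix of Φ is computed by the tensor extension on `Ω Ωᵀ`
    have hchoi : ∀ (i j : Fin n) (p q : Fin m),
        Φ (Matrix.single i j 1) p q = ∑ t, w t (i, p) * w t (j, q) := by
      intro i j p q
      have h1 := congrFun (congrFun heq (i, p)) (j, q)
      have h2 : (Matrix.of fun a b => Matrix.vecMulVec Ω Ω (i, a) (j, b))
          = Matrix.single i j (1 : ℂ) := by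
        ext a b
        simp only [Matrix.of_apply, Matrix.vecMulVec_apply, Matrix.single, hΩ]
        by_cases hia : i = a <;> by_cases hjb : j = b <;> simp [hia, hjb]
      rw [tensorExt] at h1
      simp only [Matrix.of_apply] at h1
      rw [h2] at h1
      rw [h1, Matrix.sum_apply]
      simp [Matrix.vecMulVec_apply]
    set A : Fin k → Matrix (Fin m) (Fin n) ℂ :=
      fun t => Matrix.of fun r c => w t (c, r) with hA
    have hAnn : ∀ t r c, (0 : ℂ) ≤ A t r c := fun t r c => hw t (c, r)
    have hKraus : ∀ X, Φ X = ∑ t, A t * X * (A t)ᴴ := kraus_of_choi' Φ w hw hchoi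
    refine ⟨k, A, hAnn, ?_, hKraus⟩
    -- the single-nonzero-per-row property from trace preservation
    intro j r c₁ c₂ h1 h2
    by_contra hc
    have htr := hTP (Matrix.single c₁ c₂ 1)
    have htr0 : (Matrix.single c₁ c₂ (1 : ℂ)).trace = 0 :=
      Matrix.trace_single_eq_of_ne c₁ c₂ 1 hc
    have hΦtr : (Φ (Matrix.single c₁ c₂ 1)).trace
        = ∑ p : Fin m, ∑ t : Fin k, w t (c₁, p) * w t (c₂, p) := by
      rw [Matrix.trace]
      refine Finset.sum_congr rfl fun p _ => ?_
      exact hchoi c₁ c₂ p p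
    rw [htr0] at htr
    rw [hΦtr] at htr
    have hterm : ∀ p ∈ (Finset.univ : Finset (Fin m)),
        (0 : ℂ) ≤ ∑ t : Fin k, w t (c₁, p) * w t (c₂, p) := fun p _ =>
      Finset.sum_nonneg fun t _ => mul_nonneg (hw t _) (hw t _)
    have hzero := (Finset.sum_eq_zero_iff_of_nonneg hterm).mp htr r (Finset.mem_univ r)
    have hterm2 : ∀ t ∈ (Finset.univ : Finset (Fin k)),
        (0 : ℂ) ≤ w t (c₁, r) * w t (c₂, r) := fun t _ =>
      mul_nonneg (hw t _) (hw t _)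
    have hz2 := (Finset.sum_eq_zero_iff_of_nonneg hterm2).mp hzero j (Finset.mem_univ j)
    rcases mul_eq_zero.mp hz2 with h | h
    · exact h1 h
    · exact h2 h
  · -- backward direction
    rintro ⟨k, A, hAnn, _, hKraus⟩ k' X ⟨T, x, hx, hXeq⟩
    have hAstar : ∀ j r c, star (A j r c) = A j r c := fun j r c =>
      star_of_nonneg' (hAnn j r c)
    set v : (Fin T × Fin k) → (Fin k' × Fin m) → ℂ :=
      fun tj pq => ∑ c, A tj.2 pq.2 c * x tj.1 (pq.1, c) with hv
    have hvnn : ∀ tj pq, (0 : ℂ) ≤ v tj pq := fun tj pq =>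
      Finset.sum_nonneg fun c _ => mul_nonneg (hAnn _ _ _) (hx _ _)
    have hmain : tensorExt k' ⇑Φ X = ∑ tj : Fin T × Fin k,
        Matrix.vecMulVec (v tj) (v tj) := by
      ext ⟨p1, p2⟩ ⟨q1, q2⟩
      have hM : (Matrix.of fun a b => X (p1, a) (q1, b))
          = ∑ t : Fin T, Matrix.vecMulVec (fun a => x t (p1, a)) (fun b => x t (q1, b)) := by
        ext a b
        rw [hXeq]
        simp [Matrix.sum_apply, Matrix.vecMulVec_apply]
      rw [tensorExt]
      simp only [Matrix.of_apply]
      rw [hM, map_sum, Matrix.sum_apply]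
      rw [Matrix.sum_apply, Fintype.sum_prod_type]
      refine Finset.sum_congr rfl fun t _ => ?_
      rw [hKraus, Matrix.sum_apply]
      refine Finset.sum_congr rfl fun j _ => ?_
      rw [sandwich_vecMulVec_apply' (A j) _ _ (hAstar j) p2 q2]
      simp only [Matrix.vecMulVec_apply, hv]
    rw [hmain]
    exact isCPMatrix_of_fintype_sum' v hvnn

end CPCPPaper
end

section
/- A linear map Φ : M_n → M_m is completely positive doubly non-negative (CPDNN), meaning (I_k ⊗ Φ)(X) is doubly non-negative whenever X ∈ M_k ⊗ M_n is doubly non-negative for every k ∈ N, if and only if its Choi matrix J(Φ) = Σ_{i,j=0}^{n-1} |i⟩⟨j| ⊗ Φ(|i⟩⟨j|) is a doubly non-negative matrix. -/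
open Matrix BigOperators
open scoped ComplexOrder

namespace CPCPPaper

lemma apply_eq_sum_aux {n m : ℕ}
    (Φ : Matrix (Fin n) (Fin n) ℂ →ₗ[ℂ] Matrix (Fin m) (Fin m) ℂ)
    (A : Matrix (Fin n) (Fin n) ℂ) (a b : Fin m) :
    Φ A a b = ∑ i, ∑ j, A i j * Φ (Matrix.single i j 1) a b := by
  conv_lhs => rw [Matrix.matrix_eq_sum_single A]
  have h1 : ∀ i j : Fin n, Matrix.single i j (A i j)
      = A i j • Matrix.single i j (1 : ℂ) := by
    intro i j; rw [Matrix.smul_single, smul_eq_mul, mul_one]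
  simp_rw [h1, map_sum, LinearMap.map_smul, Matrix.sum_apply, Matrix.smul_apply,
    smul_eq_mul]

lemma tensorExt_apply_eq_sum_aux {n m : ℕ} (k : ℕ)
    (Φ : Matrix (Fin n) (Fin n) ℂ →ₗ[ℂ] Matrix (Fin m) (Fin m) ℂ)
    (X : Matrix (Fin k × Fin n) (Fin k × Fin n) ℂ) (p q : Fin k × Fin m) :
    tensorExt k (⇑Φ) X p q
      = ∑ i, ∑ j, X (p.1, i) (q.1, j) * choiMatrix (⇑Φ) (i, p.2) (j, q.2) := by
  show Φ (Matrix.of fun i j => X (p.1, i) (q.1, j)) p.2 q.2 = _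
  rw [apply_eq_sum_aux]
  rfl

/-- A linear map `Φ : M_n → M_m` is completely positive doubly
non-negative (CPDNN) iff its Choi matrix is doubly non-negative. -/
theorem statement_7 {n m : ℕ}
    (Φ : Matrix (Fin n) (Fin n) ℂ →ₗ[ℂ] Matrix (Fin m) (Fin m) ℂ) :
    IsCPDNN ⇑Φ ↔ IsDNNMatrix (choiMatrix ⇑Φ) := by
  constructor
  · -- forward: apply CPDNN to the (unnormalized) maximally entangled state
    intro h
    set v : Fin n × Fin n → ℂ := fun ci => if ci.1 = ci.2 then 1 else 0 with hv
    have hvreal : ∀ p, star (v p) = v p := by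
      intro p; simp only [hv]; split <;> simp
    set X : Matrix (Fin n × Fin n) (Fin n × Fin n) ℂ := Matrix.vecMulVec v v with hX
    have hXdnn : IsDNNMatrix X := by
      constructor
      · refine Matrix.PosSemidef.of_dotProduct_mulVec_nonneg ?_ ?_
        · ext p q
          simp only [Matrix.conjTranspose_apply, hX, Matrix.vecMulVec_apply,
            star_mul', hvreal]
          ring
        · intro x
          have hXmv : X *ᵥ x = fun p => v p * ∑ q, v q * x q := by
            ext p
            simp only [hX, Matrix.mulVec, dotProduct, Matrix.vecMulVec_apply,
              Finset.mul_sum]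
            exact Finset.sum_congr rfl fun q _ => by ring
          rw [hXmv]
          have h2 : (star x ⬝ᵥ fun p => v p * ∑ q, v q * x q)
              = star (∑ q, v q * x q) * (∑ q, v q * x q) := by
            simp only [dotProduct, Pi.star_apply, star_sum, star_mul', hvreal]
            rw [Finset.sum_mul]
            exact Finset.sum_congr rfl fun p _ => by ring
          rw [h2]
          exact star_mul_self_nonneg _
      · intro p q
        simp only [hX, Matrix.vecMulVec_apply, hv]
        split <;> split <;> simp
    have hkey : choiMatrix (⇑Φ) = tensorExt n (⇑Φ) X := by
      ext p q
      show Φ (Matrix.single p.1 q.1 1) p.2 q.2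
        = Φ (Matrix.of fun i j => X (p.1, i) (q.1, j)) p.2 q.2
      have h3 : Matrix.single p.1 q.1 (1 : ℂ)
          = Matrix.of fun i j => X (p.1, i) (q.1, j) := by
        ext i j
        simp only [Matrix.of_apply, hX, Matrix.vecMulVec_apply, hv,
          Matrix.single, Matrix.of_apply]
        by_cases h1 : p.1 = i <;> by_cases h2 : q.1 = j <;> simp [h1, h2]
      rw [h3]
    rw [hkey]
    exact h n X hXdnn
  · -- backward: Choi DNN implies CPDNN
    rintro ⟨hJpsd, hJnn⟩ k X ⟨hXpsd, hXnn⟩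
    obtain ⟨B, hB⟩ : ∃ B : Matrix (Fin n × Fin m) (Fin n × Fin m) ℂ,
        choiMatrix (⇑Φ) = Bᴴ * B := by
      open scoped MatrixOrder in
      exact CStarAlgebra.nonneg_iff_eq_star_mul_self.mp hJpsd.nonneg
    constructor
    · -- positive semidefiniteness via a Kraus-type decomposition
      set L : (Fin n × Fin m) → Matrix (Fin k × Fin m) (Fin k × Fin n) ℂ :=
        fun s => Matrix.of fun p ci =>
          if p.1 = ci.1 then star (B s (ci.2, p.2)) else 0 with hL
      have hterm : ∀ (s : Fin n × Fin m) (p q : Fin k × Fin m),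
          (L s * X * (L s)ᴴ) p q
            = ∑ i, ∑ j, star (B s (i, p.2)) * X (p.1, i) (q.1, j) * B s (j, q.2) := by
        intro s p q
        simp only [Matrix.mul_apply, Matrix.conjTranspose_apply, hL, Matrix.of_apply,
          Finset.sum_mul]
        rw [Finset.sum_comm]
        rw [Fintype.sum_prod_type]
        rw [Finset.sum_eq_single p.1]
        · refine Finset.sum_congr rfl fun i _ => ?_
          simp only [if_true]
          rw [Fintype.sum_prod_type, Finset.sum_eq_single q.1]
          · refine Finset.sum_congr rfl fun j _ => ?_
            simp only [if_true, star_star]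
          · intro d _ hd
            apply Finset.sum_eq_zero; intro j _
            simp [Ne.symm hd]
          · intro habs; exact absurd (Finset.mem_univ _) habs
        · intro c _ hc
          apply Finset.sum_eq_zero; intro i _
          simp [Ne.symm hc]
        · intro habs; exact absurd (Finset.mem_univ _) habs
      have hdecomp : tensorExt k (⇑Φ) X = ∑ s, L s * X * (L s)ᴴ := by
        ext p q
        rw [tensorExt_apply_eq_sum_aux, Matrix.sum_apply]
        simp_rw [hterm]
        symm
        calc ∑ s, ∑ i, ∑ j, star (B s (i, p.2)) * X (p.1, i) (q.1, j) * B s (j, q.2)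
            = ∑ i, ∑ s, ∑ j, star (B s (i, p.2)) * X (p.1, i) (q.1, j) * B s (j, q.2) :=
              Finset.sum_comm
          _ = ∑ i, ∑ j, ∑ s, star (B s (i, p.2)) * X (p.1, i) (q.1, j) * B s (j, q.2) :=
              Finset.sum_congr rfl fun i _ => Finset.sum_comm
          _ = ∑ i, ∑ j, X (p.1, i) (q.1, j) * choiMatrix (⇑Φ) (i, p.2) (j, q.2) := by
              refine Finset.sum_congr rfl fun i _ => Finset.sum_congr rfl fun j _ => ?_
              have hc : choiMatrix (⇑Φ) (i, p.2) (j, q.2)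
                  = ∑ s, star (B s (i, p.2)) * B s (j, q.2) := by
                rw [hB]; simp [Matrix.mul_apply, Matrix.conjTranspose_apply]
              rw [hc, Finset.mul_sum]
              exact Finset.sum_congr rfl fun s _ => by ring
      rw [hdecomp]
      exact Finset.sum_induction _ _ (fun a b ha hb => ha.add hb)
        Matrix.PosSemidef.zero (fun s _ => hXpsd.mul_mul_conjTranspose_same (L s))
    · -- entrywise non-negativity
      intro p q
      rw [tensorExt_apply_eq_sum_aux]
      refine Finset.sum_nonneg fun i _ => Finset.sum_nonneg fun j _ => ?_
      exact mul_nonneg (hXnn _ _) (hJnn _ _)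
end CPCPPaper
end
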